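/- Work on ℝ^{K+4} with coordinates (x, u₀, u₁, v₀, v₁, …, v_K), K ≥ 6, let F be a smooth function of (x, u₀, v₀, u₁, v₁, v₂) regarded as a function on ℝ^{K+4}, and let D = ∂/∂x + u₁∂/∂u₀ + F∂/∂u₁ + Σ_{r=0}^{K−1} v_{r+1}∂/∂v_r. With α₀ = du₀ − u₁dx, α₁ = du₁ − Fdx, β_r = dv_r − v_{r+1}dx, α := α₁ − F_{v₂}β₁, A := F_{v₁} + F_{u₁}F_{v₂} − DF_{v₂}, β := α − Aβ₀, γ := α₀ − F_{v₂}β₀, B := F_{u₀}F_{v₂} + F_{u₁}A + F_{v₀} − DA and C := A − DF_{v₂}, the Lie derivative L_D(Cβ − Bγ) lies in the pointwise span of β and γ; explicitly, L_D(Cβ − Bγ) = Mβ + Nγ with M = DC + CF_{u₁} − B and N = CF_{u₀} − DB. -/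

import Mathlib

noncomputable section

open scoped BigOperators

/-- Index set of the coordinates `x, u₀, u₁, v₀, …, v_K` of `ℝ^{K+4}`. -/
abbrev Coord (K : ℕ) := Unit ⊕ Unit ⊕ Unit ⊕ Fin (K + 1)

/-- A point of `ℝ^{K+4}`. -/
abbrev Pt (K : ℕ) := Coord K → ℝ

/-- The coordinate `x`. -/
def ix (K : ℕ) : Coord K := Sum.inl ()
/-- The coordinate `u₀`. -/
def iu0 (K : ℕ) : Coord K := Sum.inr (Sum.inl ())
/-- The coordinate `u₁`. -/
def iu1 (K : ℕ) : Coord K := Sum.inr (Sum.inr (Sum.inl ()))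
/-- The coordinate `v_r`. -/
def iv (K r : ℕ) (h : r < K + 1) : Coord K := Sum.inr (Sum.inr (Sum.inr ⟨r, h⟩))

/-- The partial derivative `∂f/∂(coordinate i)` at a point. -/
def pd {K : ℕ} (i : Coord K) (f : Pt K → ℝ) (p : Pt K) : ℝ :=
  fderiv ℝ f p (Pi.single i 1)

/-- The components of the total derivative vector field
`D = ∂/∂x + u₁∂/∂u₀ + F∂/∂u₁ + Σ_{r=0}^{K-1} v_{r+1}∂/∂v_r`. -/
def Dvf {K : ℕ} (F : Pt K → ℝ) : Pt K → Coord K → ℝ := fun p b =>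
  match b with
  | Sum.inl _ => 1
  | Sum.inr (Sum.inl _) => p (iu1 K)
  | Sum.inr (Sum.inr (Sum.inl _)) => F p
  | Sum.inr (Sum.inr (Sum.inr r)) =>
      if h : (r : ℕ) + 1 < K + 1 then p (iv K ((r : ℕ) + 1) h) else 0

/-- The Lie derivative of a 1-form `ω` (given by its components `ω_c`) along a
vector field `X` (given by its components `X^b`):
`(L_X ω)_c = Σ_b X^b ∂ω_c/∂b + Σ_b ω_b ∂X^b/∂c`. -/
def lieD {K : ℕ} (X ω : Pt K → Coord K → ℝ) : Pt K → Coord K → ℝ := fun p c =>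
  (∑ b : Coord K, X p b * pd b (fun q => ω q c) p)
    + ∑ b : Coord K, ω p b * pd c (fun q => X q b) p

/-- The contact form `α₀ = du₀ - u₁ dx` (components). -/
def α0 (K : ℕ) : Pt K → Coord K → ℝ := fun p c =>
  if c = iu0 K then 1 else if c = ix K then -p (iu1 K) else 0

/-- The contact form `α₁ = du₁ - F dx` (components). -/
def α1 {K : ℕ} (F : Pt K → ℝ) : Pt K → Coord K → ℝ := fun p c =>
  if c = iu1 K then 1 else if c = ix K then -F p else 0

/-- The contact form `β_r = dv_r - v_{r+1} dx` (components), for `r + 1 ≤ K`. -/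
def βf (K r : ℕ) (h : r + 1 < K + 1) : Pt K → Coord K → ℝ := fun p c =>
  if c = iv K r (by omega) then 1 else if c = ix K then -p (iv K (r + 1) h) else 0

/-- The total derivative acting on functions: `Df = Σ_b D^b ∂f/∂b`. -/
def Dop {K : ℕ} (F f : Pt K → ℝ) : Pt K → ℝ := fun p =>
  ∑ b : Coord K, Dvf F p b * pd b f p

/-- The reduced form `α := α₁ - F_{v₂} β₁`. -/
def αred (K : ℕ) (hK : 6 ≤ K) (F : Pt K → ℝ) : Pt K → Coord K → ℝ := fun p c =>
  α1 F p c - pd (iv K 2 (by omega)) F p * βf K 1 (by omega) p c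

/-- The coefficient `A := F_{v₁} + F_{u₁}F_{v₂} - DF_{v₂}`. -/
def Acoef (K : ℕ) (hK : 6 ≤ K) (F : Pt K → ℝ) : Pt K → ℝ := fun p =>
  pd (iv K 1 (by omega)) F p + pd (iu1 K) F p * pd (iv K 2 (by omega)) F p
    - Dop F (pd (iv K 2 (by omega)) F) p

/-- The form `β := α - Aβ₀`. -/
def βred (K : ℕ) (hK : 6 ≤ K) (F : Pt K → ℝ) : Pt K → Coord K → ℝ := fun p c =>
  αred K hK F p c - Acoef K hK F p * βf K 0 (by omega) p c

/-- The form `γ := α₀ - F_{v₂}β₀`. -/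
def γred (K : ℕ) (hK : 6 ≤ K) (F : Pt K → ℝ) : Pt K → Coord K → ℝ := fun p c =>
  α0 K p c - pd (iv K 2 (by omega)) F p * βf K 0 (by omega) p c

/-- The coefficient `B := F_{u₀}F_{v₂} + F_{u₁}A + F_{v₀} - DA`. -/
def Bcoef (K : ℕ) (hK : 6 ≤ K) (F : Pt K → ℝ) : Pt K → ℝ := fun p =>
  pd (iu0 K) F p * pd (iv K 2 (by omega)) F p + pd (iu1 K) F p * Acoef K hK F p
    + pd (iv K 0 (by omega)) F p - Dop F (Acoef K hK F) p

/-- The coefficient `C := A - DF_{v₂}`. -/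
def Ccoef (K : ℕ) (hK : 6 ≤ K) (F : Pt K → ℝ) : Pt K → ℝ := fun p =>
  Acoef K hK F p - Dop F (pd (iv K 2 (by omega)) F) p

/-- The form `π₀ := Cβ - Bγ`. -/
def π0f (K : ℕ) (hK : 6 ≤ K) (F : Pt K → ℝ) : Pt K → Coord K → ℝ := fun p c =>
  Ccoef K hK F p * βred K hK F p c - Bcoef K hK F p * γred K hK F p c

section Helpers
variable {K : ℕ}

lemma pd_coord (i j : Coord K) (p : Pt K) :
    pd i (fun q => q j) p = if j = i then 1 else 0 := by
  unfold pd
  rw [show (fun q : Pt K => q j) = ⇑(ContinuousLinearMap.proj (R := ℝ) (φ := fun _ : Coord K => ℝ) j) from rfl]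
  rw [ContinuousLinearMap.fderiv]
  simp [Pi.single_apply]

lemma pd_const (i : Coord K) (a : ℝ) (p : Pt K) : pd i (fun _ => a) p = 0 := by
  unfold pd; rw [fderiv_fun_const]; simp

lemma pd_neg (i : Coord K) (f : Pt K → ℝ) (p : Pt K) :
    pd i (fun q => -f q) p = -pd i f p := by
  unfold pd; rw [fderiv_fun_neg]; simp

lemma pd_sub (i : Coord K) {f g : Pt K → ℝ} (p : Pt K)
    (hf : DifferentiableAt ℝ f p) (hg : DifferentiableAt ℝ g p) :
    pd i (fun q => f q - g q) p = pd i f p - pd i g p := by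
  unfold pd; rw [fderiv_fun_sub hf hg]; simp

lemma pd_mul (i : Coord K) {f g : Pt K → ℝ} (p : Pt K)
    (hf : DifferentiableAt ℝ f p) (hg : DifferentiableAt ℝ g p) :
    pd i (fun q => f q * g q) p = pd i f p * g p + f p * pd i g p := by
  unfold pd; rw [fderiv_fun_mul hf hg]; simp; ring

lemma contDiff_pd (i : Coord K) {f : Pt K → ℝ} (hf : ContDiff ℝ (⊤ : ℕ∞) f) :
    ContDiff ℝ (⊤ : ℕ∞) (pd i f) := by
  unfold pd
  exact (hf.fderiv_right (m := (⊤ : ℕ∞)) le_rfl).clm_apply contDiff_const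

lemma contDiff_Dvf {F : Pt K → ℝ} (hF : ContDiff ℝ (⊤ : ℕ∞) F) (b : Coord K) :
    ContDiff ℝ (⊤ : ℕ∞) (fun p => Dvf F p b) := by
  rcases b with _ | _ | _ | r
  · simp only [Dvf]; exact contDiff_const
  · simp only [Dvf]; fun_prop
  · simp only [Dvf]; exact hF
  · by_cases h : (r : ℕ) + 1 < K + 1 <;> simp only [Dvf, h, dif_pos, dif_neg, not_false_iff] <;> fun_prop

lemma contDiff_Dop {F f : Pt K → ℝ} (hF : ContDiff ℝ (⊤ : ℕ∞) F) (hf : ContDiff ℝ (⊤ : ℕ∞) f) :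
    ContDiff ℝ (⊤ : ℕ∞) (Dop F f) := by
  unfold Dop
  exact ContDiff.sum fun b _ => (contDiff_Dvf hF b).mul (contDiff_pd b hf)

lemma Dop_coord (F : Pt K → ℝ) (j : Coord K) (p : Pt K) :
    Dop F (fun q => q j) p = Dvf F p j := by
  unfold Dop
  simp [pd_coord, mul_ite, Finset.sum_ite_eq]

lemma Dop_const (F : Pt K → ℝ) (a : ℝ) (p : Pt K) : Dop F (fun _ => a) p = 0 := by
  unfold Dop; simp [pd_const]

lemma Dop_neg (F f : Pt K → ℝ) (p : Pt K) :
    Dop F (fun q => -f q) p = -Dop F f p := by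
  unfold Dop; simp [pd_neg, mul_neg, Finset.sum_neg_distrib]

end Helpers
section Apply
variable {K : ℕ}

lemma pd_dvf_v (c : Coord K) (r : Fin (K+1)) (p : Pt K) :
    pd c (fun q => if h : (r : ℕ) + 1 < K + 1 then q (iv K ((r : ℕ) + 1) h) else 0) p
      = (if h : (r : ℕ) + 1 < K + 1 then (if iv K ((r : ℕ) + 1) h = c then 1 else 0) else 0) := by
  by_cases h : (r : ℕ) + 1 < K + 1 <;> simp [h, pd_coord, pd_const]

lemma lieD_apply (F : Pt K → ℝ) (ω : Pt K → Coord K → ℝ) (p : Pt K) (c : Coord K) :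
    lieD (Dvf F) ω p c =
      Dop F (fun q => ω q c) p
      + ω p (iu0 K) * (if iu1 K = c then 1 else 0)
      + ω p (iu1 K) * pd c F p
      + ∑ r : Fin (K + 1), ω p (Sum.inr (Sum.inr (Sum.inr r))) *
          (if h : (r : ℕ) + 1 < K + 1 then (if iv K ((r : ℕ) + 1) h = c then 1 else 0) else 0) := by
  unfold lieD Dop
  have h2 : (∑ b : Coord K, ω p b * pd c (fun q => Dvf F q b) p)
      = ω p (iu0 K) * (if iu1 K = c then 1 else 0)
      + ω p (iu1 K) * pd c F p
      + ∑ r : Fin (K + 1), ω p (Sum.inr (Sum.inr (Sum.inr r))) *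
          (if h : (r : ℕ) + 1 < K + 1 then (if iv K ((r : ℕ) + 1) h = c then 1 else 0) else 0) := by
    rw [Fintype.sum_sum_type, Fintype.sum_sum_type, Fintype.sum_sum_type]
    simp only [Fintype.sum_unique]
    simp only [Dvf, iu0, iu1, pd_const, pd_coord, mul_zero, zero_add]
    have h4 : (∑ x : Fin (K+1), ω p (Sum.inr (Sum.inr (Sum.inr x))) *
          pd c (fun q => if h : (x : ℕ) + 1 < K + 1 then q (iv K ((x : ℕ) + 1) h) else 0) p)
        = ∑ x : Fin (K+1), ω p (Sum.inr (Sum.inr (Sum.inr x))) *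
          (if h : (x : ℕ) + 1 < K + 1 then (if iv K ((x : ℕ) + 1) h = c then 1 else 0) else 0) :=
      Finset.sum_congr rfl fun x _ => by rw [pd_dvf_v]
    rw [h4]
    exact (add_assoc _ _ _).symm
  rw [h2]; ring

end Apply

section High
variable {K : ℕ} {F : Pt K → ℝ}

lemma pd_F_high (hF : ContDiff ℝ (⊤ : ℕ∞) F)
    (hdep : ∀ p q : Pt K, p (ix K) = q (ix K) → p (iu0 K) = q (iu0 K) →
      p (iu1 K) = q (iu1 K) →
      (∀ (r : ℕ) (h : r < K + 1), r ≤ 2 → p (iv K r h) = q (iv K r h)) →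
      F p = F q)
    (s : ℕ) (hs : s < K + 1) (h3 : 3 ≤ s) (p : Pt K) :
    pd (iv K s hs) F p = 0 := by
  set e : Pt K := Pi.single (iv K s hs) 1 with he
  have hline : ∀ t : ℝ, F (p + t • e) = F p := by
    intro t
    apply hdep
    · simp [he, Pi.single_apply, ix, iv]
    · simp [he, Pi.single_apply, iu0, iv]
    · simp [he, Pi.single_apply, iu1, iv]
    · intro r h hr2
      have hrs : ¬ ((⟨r, h⟩ : Fin (K+1)) = ⟨s, hs⟩) := by
        simp only [Fin.mk.injEq]; omega
      simp [he, Pi.single_apply, iv, hrs]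
  have hF' : Differentiable ℝ F := hF.differentiable (by simp)
  have h1 : HasDerivAt (fun t : ℝ => p + t • e) e 0 := by
    simpa using ((hasDerivAt_id (0 : ℝ)).smul_const e).const_add p
  have hfd : HasFDerivAt F (fderiv ℝ F p) (p + (0 : ℝ) • e) := by
    simpa using (hF' p).hasFDerivAt
  have hd : HasDerivAt (fun t : ℝ => F (p + t • e)) (fderiv ℝ F p e) 0 :=
    hfd.comp_hasDerivAt 0 h1
  have hconst : (fun t : ℝ => F (p + t • e)) = fun _ => F p := funext hline
  rw [hconst] at hd
  have h0 := hd.unique (hasDerivAt_const 0 (F p))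
  unfold pd
  rw [← he]
  exact h0

end High

section Split
variable {K : ℕ}

lemma sum_split3 (hK : 6 ≤ K) (g : Fin (K+1) → ℝ)
    (hg : ∀ r : Fin (K+1), 3 ≤ (r : ℕ) → g r = 0) :
    ∑ r, g r = g ⟨0, by omega⟩ + g ⟨1, by omega⟩ + g ⟨2, by omega⟩ := by
  have hsub : ∑ r ∈ ({⟨0, by omega⟩, ⟨1, by omega⟩, ⟨2, by omega⟩} : Finset (Fin (K+1))), g r
      = ∑ r, g r := by
    apply Finset.sum_subset (Finset.subset_univ _)
    intro x _ hx
    apply hg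
    simp only [Finset.mem_insert, Finset.mem_singleton, Fin.ext_iff] at hx
    push_neg at hx
    omega
  rw [← hsub]
  rw [Finset.sum_insert (by simp [Fin.ext_iff]), Finset.sum_insert (by simp [Fin.ext_iff]),
    Finset.sum_singleton]
  ring

end Split
section Forms
variable {K : ℕ} (F : Pt K → ℝ)

lemma lieD_βf (r : ℕ) (h1 : r + 1 < K + 1) (h2 : r + 1 + 1 < K + 1) (p : Pt K) (c : Coord K) :
    lieD (Dvf F) (βf K r h1) p c = βf K (r + 1) h2 p c := by
  rw [lieD_apply]
  have hu0 : βf K r h1 p (iu0 K) = 0 := by simp [βf, iu0, iv, ix]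
  have hu1 : βf K r h1 p (iu1 K) = 0 := by simp [βf, iu1, iv, ix]
  have hv : ∀ rr : Fin (K+1), βf K r h1 p (Sum.inr (Sum.inr (Sum.inr rr)))
      = if rr = (⟨r, by omega⟩ : Fin (K+1)) then 1 else 0 := by
    intro rr; simp [βf, iv, ix]
  have hsum : (∑ rr : Fin (K + 1), βf K r h1 p (Sum.inr (Sum.inr (Sum.inr rr))) *
        (if h : (rr : ℕ) + 1 < K + 1 then (if iv K ((rr : ℕ) + 1) h = c then 1 else 0) else 0))
      = if iv K (r + 1) (by omega) = c then 1 else 0 := by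
    simp only [hv, ite_mul, one_mul, zero_mul]
    rw [Finset.sum_ite_eq' Finset.univ (⟨r, by omega⟩ : Fin (K+1))]
    simp only [Finset.mem_univ, if_true]
    rw [dif_pos (show ((⟨r, by omega⟩ : Fin (K+1)) : ℕ) + 1 < K + 1 from h1)]
  have hDop : Dop F (fun q => βf K r h1 q c) p
      = if c = ix K then -p (iv K (r + 1 + 1) h2) else 0 := by
    by_cases hc : c = iv K r (by omega)
    · have he : (fun q => βf K r h1 q c) = fun _ => (1:ℝ) := by
        funext q; unfold βf; rw [if_pos hc]
      have hne : c ≠ ix K := by rw [hc]; simp [iv, ix]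
      rw [he, Dop_const, if_neg hne]
    · by_cases hx : c = ix K
      · have he : (fun q => βf K r h1 q c) = fun q => -q (iv K (r + 1) h1) := by
          funext q; unfold βf; rw [if_neg hc, if_pos hx]
        rw [he, Dop_neg, Dop_coord, if_pos hx]
        simp only [Dvf, iv]
        rw [dif_pos (show ((⟨r + 1, h1⟩ : Fin (K+1)) : ℕ) + 1 < K + 1 from h2)]
      · have he : (fun q => βf K r h1 q c) = fun _ => (0:ℝ) := by
          funext q; unfold βf; rw [if_neg hc, if_neg hx]
        rw [he, Dop_const, if_neg hx]
  rw [hu0, hu1, hsum, hDop]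
  simp only [zero_mul, add_zero, zero_add]
  unfold βf
  by_cases hc : c = iv K (r + 1) (by omega : r + 1 < K + 1)
  · have hx : ¬ c = ix K := by rw [hc]; simp [iv, ix]
    rw [if_neg hx, if_pos hc.symm, if_pos hc, zero_add]
  · by_cases hx : c = ix K
    · rw [if_pos hx, if_neg (fun h => hc h.symm), if_neg hc]; ring
    · rw [if_neg hx, if_neg (fun h => hc h.symm), if_neg hc]; ring

lemma lieD_α0 (p : Pt K) (c : Coord K) :
    lieD (Dvf F) (α0 K) p c = α1 F p c := by
  rw [lieD_apply]
  have hu0 : α0 K p (iu0 K) = 1 := by simp [α0]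
  have hu1 : α0 K p (iu1 K) = 0 := by simp [α0, iu0, iu1, ix]
  have hsum : (∑ rr : Fin (K + 1), α0 K p (Sum.inr (Sum.inr (Sum.inr rr))) *
        (if h : (rr : ℕ) + 1 < K + 1 then (if iv K ((rr : ℕ) + 1) h = c then 1 else 0) else 0))
      = 0 := by
    apply Finset.sum_eq_zero
    intro rr _
    have : α0 K p (Sum.inr (Sum.inr (Sum.inr rr))) = 0 := by simp [α0, iu0, ix]
    rw [this, zero_mul]
  have hDop : Dop F (fun q => α0 K q c) p = if c = ix K then -F p else 0 := by
    by_cases hc : c = iu0 K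
    · have he : (fun q => α0 K q c) = fun _ => (1:ℝ) := by funext q; unfold α0; rw [if_pos hc]
      have hne : c ≠ ix K := by rw [hc]; simp [iu0, ix]
      rw [he, Dop_const, if_neg hne]
    · by_cases hx : c = ix K
      · have he : (fun q => α0 K q c) = fun q => -q (iu1 K) := by
          funext q; unfold α0; rw [if_neg hc, if_pos hx]
        rw [he, Dop_neg, Dop_coord, if_pos hx]
        simp [Dvf, iu1]
      · have he : (fun q => α0 K q c) = fun _ => (0:ℝ) := by
          funext q; unfold α0; rw [if_neg hc, if_neg hx]
        rw [he, Dop_const, if_neg hx]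
  rw [hu1, hu0, hsum, hDop]
  simp only [zero_mul, add_zero, one_mul]
  unfold α1
  by_cases hc : c = iu1 K
  · have hx : ¬ c = ix K := by rw [hc]; simp [iu1, ix]
    rw [if_neg hx, if_pos hc.symm, if_pos hc, zero_add]
  · by_cases hx : c = ix K
    · rw [if_pos hx, if_neg (fun h => hc h.symm), if_neg hc]; ring
    · rw [if_neg hx, if_neg (fun h => hc h.symm), if_neg hc]; ring

end Forms
section AlphaOne
variable {K : ℕ} {F : Pt K → ℝ}

lemma Dop_F_self (hK : 6 ≤ K) (hF : ContDiff ℝ (⊤ : ℕ∞) F)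
    (hdep : ∀ p q : Pt K, p (ix K) = q (ix K) → p (iu0 K) = q (iu0 K) →
      p (iu1 K) = q (iu1 K) →
      (∀ (r : ℕ) (h : r < K + 1), r ≤ 2 → p (iv K r h) = q (iv K r h)) →
      F p = F q) (p : Pt K) :
    Dop F F p = pd (ix K) F p + p (iu1 K) * pd (iu0 K) F p + F p * pd (iu1 K) F p
      + p (iv K 1 (by omega)) * pd (iv K 0 (by omega)) F p
      + p (iv K 2 (by omega)) * pd (iv K 1 (by omega)) F p
      + p (iv K 3 (by omega)) * pd (iv K 2 (by omega)) F p := by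
  unfold Dop
  rw [Fintype.sum_sum_type, Fintype.sum_sum_type, Fintype.sum_sum_type]
  simp only [Fintype.sum_unique, Dvf]
  have hzero : ∀ r : Fin (K+1), 3 ≤ (r : ℕ) →
      (if h : (r : ℕ) + 1 < K + 1 then p (iv K ((r : ℕ) + 1) h) else 0) *
        pd (Sum.inr (Sum.inr (Sum.inr r)) : Coord K) F p = 0 := by
    intro r h3
    have hp : pd (Sum.inr (Sum.inr (Sum.inr r)) : Coord K) F p = 0 := by
      have h := pd_F_high hF hdep (r : ℕ) r.isLt h3 p
      simpa [iv] using h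
    rw [hp, mul_zero]
  rw [sum_split3 hK _ hzero]
  rw [dif_pos (show (0:ℕ) + 1 < K + 1 by omega), dif_pos (show (1:ℕ) + 1 < K + 1 by omega),
    dif_pos (show (2:ℕ) + 1 < K + 1 by omega)]
  norm_num [iv, ix, iu0, iu1]
  ring

lemma lieD_α1 (hK : 6 ≤ K) (hF : ContDiff ℝ (⊤ : ℕ∞) F)
    (hdep : ∀ p q : Pt K, p (ix K) = q (ix K) → p (iu0 K) = q (iu0 K) →
      p (iu1 K) = q (iu1 K) →
      (∀ (r : ℕ) (h : r < K + 1), r ≤ 2 → p (iv K r h) = q (iv K r h)) →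
      F p = F q) (p : Pt K) (c : Coord K) :
    lieD (Dvf F) (α1 F) p c
      = pd (iu0 K) F p * α0 K p c + pd (iu1 K) F p * α1 F p c
        + pd (iv K 0 (by omega)) F p * βf K 0 (by omega) p c
        + pd (iv K 1 (by omega)) F p * βf K 1 (by omega) p c
        + pd (iv K 2 (by omega)) F p * βf K 2 (by omega) p c := by
  rw [lieD_apply]
  have hu0 : α1 F p (iu0 K) = 0 := by simp [α1, iu0, iu1, ix]
  have hu1 : α1 F p (iu1 K) = 1 := by simp [α1]
  have hsum : (∑ rr : Fin (K + 1), α1 F p (Sum.inr (Sum.inr (Sum.inr rr))) *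
        (if h : (rr : ℕ) + 1 < K + 1 then (if iv K ((rr : ℕ) + 1) h = c then 1 else 0) else 0))
      = 0 := by
    apply Finset.sum_eq_zero
    intro rr _
    have : α1 F p (Sum.inr (Sum.inr (Sum.inr rr))) = 0 := by simp [α1, iu1, ix]
    rw [this, zero_mul]
  have hDop : Dop F (fun q => α1 F q c) p = if c = ix K then -Dop F F p else 0 := by
    by_cases hc : c = iu1 K
    · have he : (fun q => α1 F q c) = fun _ => (1:ℝ) := by funext q; unfold α1; rw [if_pos hc]
      have hne : c ≠ ix K := by rw [hc]; simp [iu1, ix]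
      rw [he, Dop_const, if_neg hne]
    · by_cases hx : c = ix K
      · have he : (fun q => α1 F q c) = fun q => -F q := by
          funext q; unfold α1; rw [if_neg hc, if_pos hx]
        rw [he, Dop_neg, if_pos hx]
      · have he : (fun q => α1 F q c) = fun _ => (0:ℝ) := by
          funext q; unfold α1; rw [if_neg hc, if_neg hx]
        rw [he, Dop_const, if_neg hx]
  rw [hu0, hu1, hsum, hDop]
  simp only [zero_mul, one_mul, add_zero, zero_add]
  rcases c with ⟨⟩ | ⟨⟩ | ⟨⟩ | s
  · rw [if_pos (show (Sum.inl () : Coord K) = ix K from rfl)]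
    rw [Dop_F_self hK hF hdep]
    simp [α0, α1, βf, ix, iu0, iu1, iv, pd, Fin.ext_iff]
    ring
  · rw [if_neg (by simp [ix])]
    simp [α0, α1, βf, ix, iu0, iu1, iv, pd, Fin.ext_iff]
  · rw [if_neg (by simp [ix])]
    simp [α0, α1, βf, ix, iu0, iu1, iv, pd, Fin.ext_iff]
  · rw [if_neg (by simp [ix])]
    obtain ⟨s, hs⟩ := s
    rcases s with _ | _ | _ | s
    · simp [α0, α1, βf, ix, iu0, iu1, iv, pd, Fin.ext_iff]
    · simp [α0, α1, βf, ix, iu0, iu1, iv, pd, Fin.ext_iff]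
    · simp [α0, α1, βf, ix, iu0, iu1, iv, pd, Fin.ext_iff]
    · have hp : pd (Sum.inr (Sum.inr (Sum.inr (⟨s+3, hs⟩ : Fin (K+1)))) : Coord K) F p = 0 := by
        have h := pd_F_high hF hdep (s+3) hs (by omega) p
        simpa [iv] using h
      rw [hp]
      simp [α0, α1, βf, ix, iu0, iu1, iv, Fin.ext_iff]
end AlphaOne
section Leibniz
variable {K : ℕ}

lemma lieD_sub_smul (F : Pt K → ℝ) (ω η : Pt K → Coord K → ℝ) (f : Pt K → ℝ)
    (p : Pt K) (c : Coord K)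
    (hω : DifferentiableAt ℝ (fun q => ω q c) p)
    (hη : DifferentiableAt ℝ (fun q => η q c) p)
    (hf : DifferentiableAt ℝ f p) :
    lieD (Dvf F) (fun q c' => ω q c' - f q * η q c') p c
      = lieD (Dvf F) ω p c - (Dop F f p * η p c + f p * lieD (Dvf F) η p c) := by
  unfold lieD Dop
  have hpd : ∀ b : Coord K, pd b (fun q => ω q c - f q * η q c) p
      = pd b (fun q => ω q c) p - (pd b f p * η p c + f p * pd b (fun q => η q c) p) := by
    intro b
    rw [pd_sub b p hω (hf.fun_mul hη), pd_mul b p hf hη]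
  simp only [hpd]
  have e1 : (∑ b : Coord K, Dvf F p b *
        (pd b (fun q => ω q c) p - (pd b f p * η p c + f p * pd b (fun q => η q c) p)))
      = (∑ b : Coord K, Dvf F p b * pd b (fun q => ω q c) p)
        - ((∑ b : Coord K, Dvf F p b * pd b f p) * η p c
          + f p * ∑ b : Coord K, Dvf F p b * pd b (fun q => η q c) p) := by
    rw [Finset.sum_mul, Finset.mul_sum, ← Finset.sum_add_distrib, ← Finset.sum_sub_distrib]
    exact Finset.sum_congr rfl fun b _ => by ring
  have e2 : (∑ b : Coord K, (ω p b - f p * η p b) * pd c (fun q => Dvf F q b) p)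
      = (∑ b : Coord K, ω p b * pd c (fun q => Dvf F q b) p)
        - f p * ∑ b : Coord K, η p b * pd c (fun q => Dvf F q b) p := by
    rw [Finset.mul_sum, ← Finset.sum_sub_distrib]
    exact Finset.sum_congr rfl fun b _ => by ring
  rw [e1, e2]
  ring

lemma lieD_smul_sub (F : Pt K → ℝ) (g f : Pt K → ℝ) (ω η : Pt K → Coord K → ℝ)
    (p : Pt K) (c : Coord K)
    (hg : DifferentiableAt ℝ g p) (hf : DifferentiableAt ℝ f p)
    (hω : DifferentiableAt ℝ (fun q => ω q c) p)
    (hη : DifferentiableAt ℝ (fun q => η q c) p) :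
    lieD (Dvf F) (fun q c' => g q * ω q c' - f q * η q c') p c
      = (Dop F g p * ω p c + g p * lieD (Dvf F) ω p c)
        - (Dop F f p * η p c + f p * lieD (Dvf F) η p c) := by
  unfold lieD Dop
  have hpd : ∀ b : Coord K, pd b (fun q => g q * ω q c - f q * η q c) p
      = (pd b g p * ω p c + g p * pd b (fun q => ω q c) p)
        - (pd b f p * η p c + f p * pd b (fun q => η q c) p) := by
    intro b
    rw [pd_sub b p (hg.fun_mul hω) (hf.fun_mul hη), pd_mul b p hg hω, pd_mul b p hf hη]
  simp only [hpd]
  have e1 : (∑ b : Coord K, Dvf F p b *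
        ((pd b g p * ω p c + g p * pd b (fun q => ω q c) p)
          - (pd b f p * η p c + f p * pd b (fun q => η q c) p)))
      = ((∑ b : Coord K, Dvf F p b * pd b g p) * ω p c
          + g p * ∑ b : Coord K, Dvf F p b * pd b (fun q => ω q c) p)
        - ((∑ b : Coord K, Dvf F p b * pd b f p) * η p c
          + f p * ∑ b : Coord K, Dvf F p b * pd b (fun q => η q c) p) := by
    rw [Finset.sum_mul, Finset.sum_mul, Finset.mul_sum, Finset.mul_sum,
      ← Finset.sum_add_distrib, ← Finset.sum_add_distrib, ← Finset.sum_sub_distrib]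
    exact Finset.sum_congr rfl fun b _ => by ring
  have e2 : (∑ b : Coord K, (g p * ω p b - f p * η p b) * pd c (fun q => Dvf F q b) p)
      = g p * (∑ b : Coord K, ω p b * pd c (fun q => Dvf F q b) p)
        - f p * ∑ b : Coord K, η p b * pd c (fun q => Dvf F q b) p := by
    rw [Finset.mul_sum, Finset.mul_sum, ← Finset.sum_sub_distrib]
    exact Finset.sum_congr rfl fun b _ => by ring
  rw [e1, e2]
  ring

end Leibniz

section Smooth
variable {K : ℕ} {F : Pt K → ℝ}

lemma contDiff_α0c (c : Coord K) : ContDiff ℝ (⊤ : ℕ∞) (fun q : Pt K => α0 K q c) := by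
  by_cases h1 : c = iu0 K
  · have he : (fun q : Pt K => α0 K q c) = fun _ => (1:ℝ) := by
      funext q; unfold α0; rw [if_pos h1]
    rw [he]; fun_prop
  · by_cases h2 : c = ix K
    · have he : (fun q : Pt K => α0 K q c) = fun q => -q (iu1 K) := by
        funext q; unfold α0; rw [if_neg h1, if_pos h2]
      rw [he]; fun_prop
    · have he : (fun q : Pt K => α0 K q c) = fun _ => (0:ℝ) := by
        funext q; unfold α0; rw [if_neg h1, if_neg h2]
      rw [he]; fun_prop

lemma contDiff_α1c (hF : ContDiff ℝ (⊤ : ℕ∞) F) (c : Coord K) :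
    ContDiff ℝ (⊤ : ℕ∞) (fun q : Pt K => α1 F q c) := by
  by_cases h1 : c = iu1 K
  · have he : (fun q : Pt K => α1 F q c) = fun _ => (1:ℝ) := by
      funext q; unfold α1; rw [if_pos h1]
    rw [he]; fun_prop
  · by_cases h2 : c = ix K
    · have he : (fun q : Pt K => α1 F q c) = fun q => -F q := by
        funext q; unfold α1; rw [if_neg h1, if_pos h2]
      rw [he]; exact hF.neg
    · have he : (fun q : Pt K => α1 F q c) = fun _ => (0:ℝ) := by
        funext q; unfold α1; rw [if_neg h1, if_neg h2]
      rw [he]; fun_prop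

lemma contDiff_βfc (r : ℕ) (h1 : r + 1 < K + 1) (c : Coord K) :
    ContDiff ℝ (⊤ : ℕ∞) (fun q : Pt K => βf K r h1 q c) := by
  by_cases hc : c = iv K r (by omega)
  · have he : (fun q : Pt K => βf K r h1 q c) = fun _ => (1:ℝ) := by
      funext q; unfold βf; rw [if_pos hc]
    rw [he]; fun_prop
  · by_cases h2 : c = ix K
    · have he : (fun q : Pt K => βf K r h1 q c) = fun q => -q (iv K (r + 1) h1) := by
        funext q; unfold βf; rw [if_neg hc, if_pos h2]
      rw [he]; fun_prop
    · have he : (fun q : Pt K => βf K r h1 q c) = fun _ => (0:ℝ) := by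
        funext q; unfold βf; rw [if_neg hc, if_neg h2]
      rw [he]; fun_prop

lemma contDiff_Acoef (hK : 6 ≤ K) (hF : ContDiff ℝ (⊤ : ℕ∞) F) :
    ContDiff ℝ (⊤ : ℕ∞) (Acoef K hK F) :=
  ((contDiff_pd _ hF).add ((contDiff_pd _ hF).mul (contDiff_pd _ hF))).sub
    (contDiff_Dop hF (contDiff_pd _ hF))

lemma contDiff_Bcoef (hK : 6 ≤ K) (hF : ContDiff ℝ (⊤ : ℕ∞) F) :
    ContDiff ℝ (⊤ : ℕ∞) (Bcoef K hK F) :=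
  ((((contDiff_pd _ hF).mul (contDiff_pd _ hF)).add
      ((contDiff_pd _ hF).mul (contDiff_Acoef hK hF))).add (contDiff_pd _ hF)).sub
    (contDiff_Dop hF (contDiff_Acoef hK hF))

lemma contDiff_Ccoef (hK : 6 ≤ K) (hF : ContDiff ℝ (⊤ : ℕ∞) F) :
    ContDiff ℝ (⊤ : ℕ∞) (Ccoef K hK F) :=
  (contDiff_Acoef hK hF).sub (contDiff_Dop hF (contDiff_pd _ hF))

lemma contDiff_αredc (hK : 6 ≤ K) (hF : ContDiff ℝ (⊤ : ℕ∞) F) (c : Coord K) :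
    ContDiff ℝ (⊤ : ℕ∞) (fun q : Pt K => αred K hK F q c) :=
  (contDiff_α1c hF c).sub ((contDiff_pd _ hF).mul (contDiff_βfc 1 (by omega) c))

lemma contDiff_βredc (hK : 6 ≤ K) (hF : ContDiff ℝ (⊤ : ℕ∞) F) (c : Coord K) :
    ContDiff ℝ (⊤ : ℕ∞) (fun q : Pt K => βred K hK F q c) :=
  (contDiff_αredc hK hF c).sub ((contDiff_Acoef hK hF).mul (contDiff_βfc 0 (by omega) c))

lemma contDiff_γredc (hK : 6 ≤ K) (hF : ContDiff ℝ (⊤ : ℕ∞) F) (c : Coord K) :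
    ContDiff ℝ (⊤ : ℕ∞) (fun q : Pt K => γred K hK F q c) :=
  (contDiff_α0c c).sub ((contDiff_pd _ hF).mul (contDiff_βfc 0 (by omega) c))

end Smooth

/-- Final step of Section 3.2: `L_D(Cβ - Bγ)` lies in the pointwise span of
`β` and `γ`; explicitly `L_D(Cβ - Bγ) = Mβ + Nγ` with `M = DC + CF_{u₁} - B`
and `N = CF_{u₀} - DB`. -/
theorem lieD_pi0 (K : ℕ) (hK : 6 ≤ K) (F : Pt K → ℝ)
    (hF : ContDiff ℝ (⊤ : ℕ∞) F)
    (hdep : ∀ p q : Pt K, p (ix K) = q (ix K) → p (iu0 K) = q (iu0 K) →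
      p (iu1 K) = q (iu1 K) →
      (∀ (r : ℕ) (h : r < K + 1), r ≤ 2 → p (iv K r h) = q (iv K r h)) →
      F p = F q) :
    ∀ (p : Pt K) (c : Coord K),
      lieD (Dvf F) (π0f K hK F) p c =
        (Dop F (Ccoef K hK F) p + Ccoef K hK F p * pd (iu1 K) F p
            - Bcoef K hK F p) * βred K hK F p c
        + (Ccoef K hK F p * pd (iu0 K) F p - Dop F (Bcoef K hK F) p)
            * γred K hK F p c := by
  intro p c
  have h2 : (2:ℕ) < K + 1 := by omega
  have h01 : (0:ℕ) + 1 < K + 1 := by omega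
  have h11 : (1:ℕ) + 1 < K + 1 := by omega
  have h21 : (2:ℕ) + 1 < K + 1 := by omega
  -- differentiability facts
  have dα0 : DifferentiableAt ℝ (fun q => α0 K q c) p :=
    (contDiff_α0c c).differentiable (by simp) p
  have dα1 : DifferentiableAt ℝ (fun q => α1 F q c) p :=
    (contDiff_α1c hF c).differentiable (by simp) p
  have dβ0 : DifferentiableAt ℝ (fun q => βf K 0 h01 q c) p :=
    (contDiff_βfc 0 h01 c).differentiable (by simp) p
  have dβ1 : DifferentiableAt ℝ (fun q => βf K 1 h11 q c) p :=
    (contDiff_βfc 1 h11 c).differentiable (by simp) p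
  have dpdF2 : DifferentiableAt ℝ (pd (iv K 2 h2) F) p :=
    (contDiff_pd _ hF).differentiable (by simp) p
  have dA : DifferentiableAt ℝ (Acoef K hK F) p :=
    (contDiff_Acoef hK hF).differentiable (by simp) p
  have dB : DifferentiableAt ℝ (Bcoef K hK F) p :=
    (contDiff_Bcoef hK hF).differentiable (by simp) p
  have dC : DifferentiableAt ℝ (Ccoef K hK F) p :=
    (contDiff_Ccoef hK hF).differentiable (by simp) p
  have dαred : DifferentiableAt ℝ (fun q => αred K hK F q c) p :=
    (contDiff_αredc hK hF c).differentiable (by simp) p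
  have dβred : DifferentiableAt ℝ (fun q => βred K hK F q c) p :=
    (contDiff_βredc hK hF c).differentiable (by simp) p
  have dγred : DifferentiableAt ℝ (fun q => γred K hK F q c) p :=
    (contDiff_γredc hK hF c).differentiable (by simp) p
  -- structure equation for γ
  have hγ : lieD (Dvf F) (γred K hK F) p c
      = βred K hK F p c + Ccoef K hK F p * βf K 0 h01 p c := by
    have e : γred K hK F = fun q c' => α0 K q c' - pd (iv K 2 h2) F q * βf K 0 h01 q c' := rfl
    rw [e, lieD_sub_smul F (α0 K) (βf K 0 h01) (pd (iv K 2 h2) F) p c dα0 dβ0 dpdF2]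
    rw [lieD_α0, lieD_βf F 0 h01 h11]
    simp only [Nat.reduceAdd]
    simp only [βred, αred, Ccoef, Acoef]
    ring
  -- structure equation for β
  have hβ : lieD (Dvf F) (βred K hK F) p c
      = pd (iu1 K) F p * βred K hK F p c + pd (iu0 K) F p * γred K hK F p c
        + Bcoef K hK F p * βf K 0 h01 p c := by
    have e : βred K hK F = fun q c' => αred K hK F q c' - Acoef K hK F q * βf K 0 h01 q c' := rfl
    rw [e, lieD_sub_smul F (αred K hK F) (βf K 0 h01) (Acoef K hK F) p c dαred dβ0 dA]
    have e2 : αred K hK F = fun q c' => α1 F q c' - pd (iv K 2 h2) F q * βf K 1 h11 q c' := rfl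
    rw [e2, lieD_sub_smul F (α1 F) (βf K 1 h11) (pd (iv K 2 h2) F) p c dα1 dβ1 dpdF2]
    rw [lieD_α1 hK hF hdep, lieD_βf F 1 h11 h21, lieD_βf F 0 h01 h11]
    simp only [Nat.reduceAdd]
    simp only [βred, αred, γred, Bcoef, Ccoef, Acoef]
    ring
  -- assembly
  have e : π0f K hK F
      = fun q c' => Ccoef K hK F q * βred K hK F q c' - Bcoef K hK F q * γred K hK F q c' := rfl
  rw [e, lieD_smul_sub F (Ccoef K hK F) (Bcoef K hK F) (βred K hK F) (γred K hK F) p c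
    dC dB dβred dγred]
  rw [hβ, hγ]
  ring
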